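/- Let 𝒢=(𝒱,ℰ) be a bipartite countable locally finite graph, let C₄ be the 4-cycle, and let G ⊆ Aut(𝒢) be any subgroup. Then the homomorphism space Hom(𝒢, C₄) is both Hammersley-Clifford and G-Hammersley-Clifford. -/

import Mathlib

/-!
A configuration `x ∈ Hom(𝒢, C₄)` is a proper 2-colouring (the parities of the symbols) together
with a free bit at every vertex, and two asymptotic configurations are joined by single-site bit
flips and parity flips of finite connected components. It therefore suffices to produce a nearest
neighbour interaction whose Gibbs cocycle agrees with a given Markov cocycle `M` on these moves.

Measured from the vacuum in which every bit is `0`, the increment of `M` for a bit flip at `v`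
splits into a site term and one term per neighbour: the mixed difference for two adjacent sites
`v, u` depends only on their two symbols, because flips at `v` and at `u` commute and `𝒢` has no
triangles. This gives site and edge potentials. What they miss of the increment of a component flip
is invariant under bit flips and changes sign under the flip, so it depends only on the phase of the
colouring on the component, and it is spread evenly over the sites of that component.

Every potential is the value of `M` at some configuration satisfying a local condition, and by the
Markov property the value does not depend on the configuration chosen. Transporting such a
configuration by an automorphism `g` fixing `M` gives one for the transported condition, so the
interaction built from `M` is invariant under every such `g`.
-/

open scoped Classical

namespace HC

variable {V : Type*} {A : Type*}

/-- The external vertex boundary of a set of vertices. -/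
def boundary (G : SimpleGraph V) (F : Set V) : Set V :=
  {u | u ∉ F ∧ ∃ v ∈ F, G.Adj u v}

/-- The language of `X` on `F`: the set of patterns on `F` appearing in `X`. -/
def lang (X : Set (V → A)) (F : Set V) : Set (F → A) :=
  F.restrict '' X

/-- The `n`-ball around `v` in the graph metric. -/
def ballSet (G : SimpleGraph V) (v : V) (n : ℕ) : Set V :=
  {u | ∃ p : G.Walk v u, p.length ≤ n}

/-- Asymptotic pairs: pairs of configurations in `X` differing at finitely many sites. -/
def Delta (X : Set (V → A)) : Set ((V → A) × (V → A)) :=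
  {p | p.1 ∈ X ∧ p.2 ∈ X ∧ {v | p.1 v ≠ p.2 v}.Finite}

/-- Topological Markov field. -/
def IsTMF [TopologicalSpace A] (G : SimpleGraph V) (X : Set (V → A)) : Prop :=
  IsClosed X ∧
    ∀ x ∈ X, ∀ y ∈ X, ∀ F : Set V, F.Finite →
      (∀ u ∈ boundary G F, x u = y u) →
      (fun v => if v ∈ F then x v else y v) ∈ X

/-- Nearest neighbour constraint space: the set of configurations avoiding a
set of forbidden patterns on finite cliques. -/
def IsNNConstraint (G : SimpleGraph V) (X : Set (V → A)) : Prop :=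
  ∃ 𝓕 : ∀ F : Set V, Set (F → A),
    X = {x : V → A | ∀ F : Set V, F.Finite → G.IsClique F → F.restrict x ∉ 𝓕 F}

/-- `s` is a safe symbol for `X`. -/
def IsSafeSymbol (X : Set (V → A)) (s : A) : Prop :=
  ∀ x ∈ X, ∀ S : Set V, (fun v => if v ∈ S then x v else s) ∈ X

/-- The pattern `(c at v, d at w)` belongs to the language of `X`. -/
def edgeB (X : Set (V → A)) (v w : V) (c d : A) : Prop :=
  ∃ x ∈ X, x v = c ∧ x w = d

/-- The single-site pattern `c at v` belongs to the language of `X`. -/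
def siteB (X : Set (V → A)) (v : V) (c : A) : Prop :=
  ∃ x ∈ X, x v = c

/-- The pairs `(x,y)` and `(z,w)` are Markov-similar. -/
def MarkovSimilar (G : SimpleGraph V) (x y z w : V → A) : Prop :=
  ∃ S : Set V, S.Finite ∧
    (∀ u, u ∉ S → x u = y u ∧ z u = w u) ∧
    (∀ u, u ∈ S ∪ boundary G S → x u = z u ∧ y u = w u)

/-- A Markov cocycle on `X` (realised as a real function on pairs of
configurations, vanishing off the asymptotic relation `Δ_X`). -/
def IsMarkovCocycle (G : SimpleGraph V) (X : Set (V → A))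
    (M : (V → A) → (V → A) → ℝ) : Prop :=
  (∀ x y : V → A, (x, y) ∉ Delta X → M x y = 0) ∧
  (∀ x y z : V → A, (x, y) ∈ Delta X → (y, z) ∈ Delta X → M x z = M x y + M y z) ∧
  (∀ x y z w : V → A, (x, y) ∈ Delta X → (z, w) ∈ Delta X →
    MarkovSimilar G x y z w → M x y = M z w)

/-- A nearest neighbour interaction: a real weight for each pattern,
vanishing on patterns whose domain is not a finite clique. -/
def IsNNInteraction (G : SimpleGraph V) (U : ∀ F : Set V, (F → A) → ℝ) : Prop :=
  ∀ F : Set V, ¬(F.Finite ∧ G.IsClique F) → ∀ p : F → A, U F p = 0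

/-- `Σ_{F ⊆ V finite} (U(y|_F) - U(x|_F))`. -/
noncomputable def gibbsSum (U : ∀ F : Set V, (F → A) → ℝ) (x y : V → A) : ℝ :=
  ∑ᶠ F : Set V, (U F (F.restrict y) - U F (F.restrict x))

/-- A Gibbs cocycle with some nearest neighbour interaction. -/
def IsGibbsCocycle (G : SimpleGraph V) (X : Set (V → A))
    (M : (V → A) → (V → A) → ℝ) : Prop :=
  (∀ x y : V → A, (x, y) ∉ Delta X → M x y = 0) ∧
  ∃ U : ∀ F : Set V, (F → A) → ℝ, IsNNInteraction G U ∧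
    ∀ x y : V → A, (x, y) ∈ Delta X → M x y = gibbsSum U x y

/-- The space `𝐌_X` of Markov cocycles on `X`. -/
def markovSet (G : SimpleGraph V) (X : Set (V → A)) :
    Set ((V → A) → (V → A) → ℝ) :=
  {M | IsMarkovCocycle G X M}

/-- The space `𝐆_X` of Gibbs cocycles with nearest neighbour interactions on `X`. -/
def gibbsSet (G : SimpleGraph V) (X : Set (V → A)) :
    Set ((V → A) → (V → A) → ℝ) :=
  {M | IsGibbsCocycle G X M}

/-- `X` is Hammersley-Clifford: `𝐌_X = 𝐆_X`. -/
def IsHammersleyClifford (G : SimpleGraph V) (X : Set (V → A)) : Prop :=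
  markovSet G X = gibbsSet G X

/-- The action of a permutation of the vertices on configurations. -/
def confAct (g : Equiv.Perm V) (x : V → A) : V → A :=
  fun v => x (g⁻¹ v)

/-- `S` consists of automorphisms of the graph `G`. -/
def PreservesAdj (G : SimpleGraph V) (S : Subgroup (Equiv.Perm V)) : Prop :=
  ∀ g ∈ S, ∀ u v : V, G.Adj (g u) (g v) ↔ G.Adj u v

/-- `X` is invariant under the subgroup `S`. -/
def InvariantSpace (S : Subgroup (Equiv.Perm V)) (X : Set (V → A)) : Prop :=
  ∀ g ∈ S, confAct g '' X = X

/-- The cocycle `M` is `S`-invariant. -/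
def InvariantCocycle (S : Subgroup (Equiv.Perm V)) (M : (V → A) → (V → A) → ℝ) : Prop :=
  ∀ g ∈ S, ∀ x y : V → A, M (confAct g x) (confAct g y) = M x y

/-- The interaction `U` is `S`-invariant: `U(ga) = U(a)` for every pattern `a`. -/
def InvariantInteraction (S : Subgroup (Equiv.Perm V))
    (U : ∀ F : Set V, (F → A) → ℝ) : Prop :=
  ∀ g ∈ S, ∀ F : Set V, ∀ x : V → A,
    U (⇑g '' F) ((⇑g '' F).restrict (confAct g x)) = U F (F.restrict x)

/-- The space `𝐌^G_X` of `S`-invariant Markov cocycles on `X`. -/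
def markovSetInv (G : SimpleGraph V) (S : Subgroup (Equiv.Perm V)) (X : Set (V → A)) :
    Set ((V → A) → (V → A) → ℝ) :=
  {M | IsMarkovCocycle G X M ∧ InvariantCocycle S M}

/-- The space `𝐆^G_X` of Gibbs cocycles with `S`-invariant nearest neighbour
interactions on `X`. -/
def gibbsSetInv (G : SimpleGraph V) (S : Subgroup (Equiv.Perm V)) (X : Set (V → A)) :
    Set ((V → A) → (V → A) → ℝ) :=
  {M | (∀ x y : V → A, (x, y) ∉ Delta X → M x y = 0) ∧
    ∃ U : ∀ F : Set V, (F → A) → ℝ, IsNNInteraction G U ∧ InvariantInteraction S U ∧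
      ∀ x y : V → A, (x, y) ∈ Delta X → M x y = gibbsSum U x y}

/-- `X` is `G`-Hammersley-Clifford: `𝐌^G_X = 𝐆^G_X`. -/
def IsGHammersleyClifford (G : SimpleGraph V) (S : Subgroup (Equiv.Perm V))
    (X : Set (V → A)) : Prop :=
  markovSetInv G S X = gibbsSetInv G S X

/-- The symbol `a` can be folded into the symbol `b` in `X`. -/
def FoldsInto (G : SimpleGraph V) (X : Set (V → A)) (a b : A) : Prop :=
  a ≠ b ∧
    ∀ v₁ v₂ v₃ : V, G.Adj v₁ v₂ → G.Adj v₂ v₃ → ∀ c : A,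
      edgeB X v₁ v₂ a c →
        edgeB X v₁ v₂ b c ∧ edgeB X v₂ v₃ c b ∧
          ∃ x ∈ X, ∀ u ∈ boundary G (ballSet G v₁ 1), x u = b

/-- `X ∩ (𝒜∖{a})^𝒱`. -/
def foldSpace (X : Set (V → A)) (a : A) : Set (V → A) :=
  X ∩ {x | ∀ v, x v ≠ a}

/-- `Y` is a fold of `X` (and `X` an unfold of `Y`). -/
def IsFoldOf (G : SimpleGraph V) (Y X : Set (V → A)) : Prop :=
  ∃ a b : A, FoldsInto G X a b ∧ Y = foldSpace X a

/-- `P₁, P₂` are the partite classes of a bipartition of `G`. -/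
def IsBipartition (G : SimpleGraph V) (P₁ P₂ : Set V) : Prop :=
  (∀ v : V, v ∈ P₁ ∨ v ∈ P₂) ∧ Disjoint P₁ P₂ ∧
    ∀ u v : V, G.Adj u v → (u ∈ P₁ ∧ v ∈ P₂) ∨ (u ∈ P₂ ∧ v ∈ P₁)

/-- `G` is bipartite. -/
def Bipartite (G : SimpleGraph V) : Prop :=
  ∃ P₁ P₂ : Set V, IsBipartition G P₁ P₂

/-- `θ^v_c(x)`: change the value of `x` at `v` to `c`. -/
noncomputable def theta (x : V → A) (v : V) (c : A) : V → A :=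
  fun u => if u = v then c else x u

/-- `θ^{w₁,…,w_r}_{c₁,…,c_r}(x)`: change the value of `x` at each `w i` to `c i`. -/
noncomputable def multiUpdate (x : V → A) {r : ℕ} (w : Fin r → V) (c : Fin r → A) :
    V → A :=
  fun u => if h : ∃ i, w i = u then c h.choose else x u

/-- Restriction of a cocycle to the asymptotic pairs of a subspace `Y`. -/
noncomputable def restrictCocycle (Y : Set (V → A)) (M : (V → A) → (V → A) → ℝ) :
    (V → A) → (V → A) → ℝ :=
  fun x y => if (x, y) ∈ Delta Y then M x y else 0

/-- The pair `(x,y)` is `U`-good for the cocycle `M`. -/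
def VGood (M : (V → A) → (V → A) → ℝ) (U : ∀ F : Set V, (F → A) → ℝ)
    (x y : V → A) : Prop :=
  M x y = gibbsSum U x y

/-- `𝒱₁`: vertices `v` admitting a neighbour `w` with `(a,a) ∈ ℬ_{v,w}(X)`. -/
def Vone (G : SimpleGraph V) (X : Set (V → A)) (a : A) : Set V :=
  {v | ∃ w, G.Adj v w ∧ edgeB X v w a a}

/-- `𝒱₂`: vertices not in `𝒱₁` where the symbol `a` can appear. -/
def Vtwo (G : SimpleGraph V) (X : Set (V → A)) (a : A) : Set V :=
  {v | v ∉ Vone G X a ∧ siteB X v a}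

/-- The space of graph homomorphisms from `G` to `H`, as a configuration space. -/
def homSpace {B : Type*} (G : SimpleGraph V) (H : SimpleGraph B) : Set (V → B) :=
  {x | ∀ v w : V, G.Adj v w → H.Adj (x v) (x w)}

/-- The 4-cycle `C₄` on the vertices `{0,1,2,3}`. -/
def C4 : SimpleGraph (Fin 4) :=
  SimpleGraph.fromRel (fun i j => (i.1 + 1) % 4 = j.1)

section GibbsSum

variable {G : SimpleGraph V} {U : ∀ F : Set V, (F → A) → ℝ}

lemma support_gibbsTerm_subset (hU : IsNNInteraction G U) {x y : V → A} :
    (Function.support fun F : Set V => U F (F.restrict y) - U F (F.restrict x)) ⊆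
      {F | G.IsClique F ∧ ∃ v ∈ F, x v ≠ y v} := by
  intro F hF
  by_cases hcl : F.Finite ∧ G.IsClique F
  · refine ⟨hcl.2, ?_⟩
    by_contra! h
    exact hF (by simp [show F.restrict y = F.restrict x from funext fun v => (h v v.2).symm])
  · exact absurd (by simp [hU F hcl]) hF

lemma finite_support_gibbsTerm [G.LocallyFinite] (hU : IsNNInteraction G U) {x y : V → A}
    (hxy : {v | x v ≠ y v}.Finite) :
    (Function.support fun F : Set V => U F (F.restrict y) - U F (F.restrict x)).Finite := by
  refine ((hxy.union (hxy.biUnion fun v _ => (G.neighborSet v).toFinite)).finite_subsets).subset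
    ((support_gibbsTerm_subset hU).trans ?_)
  rintro F ⟨hcl, v, hvF, hv⟩ w hw
  by_cases hwv : w = v
  · exact Or.inl (hwv ▸ hv)
  · exact Or.inr (Set.mem_biUnion hv (hcl hvF hw (Ne.symm hwv)))

lemma gibbsSum_add_gibbsSum [G.LocallyFinite] (hU : IsNNInteraction G U) {x y z : V → A}
    (hxy : {v | x v ≠ y v}.Finite) (hyz : {v | y v ≠ z v}.Finite) :
    gibbsSum U x y + gibbsSum U y z = gibbsSum U x z := by
  rw [gibbsSum, gibbsSum, gibbsSum, ← finsum_add_distrib (finite_support_gibbsTerm hU hxy)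
    (finite_support_gibbsTerm hU hyz)]
  exact finsum_congr fun F => by ring

lemma gibbsSum_add {U₁ U₂ : ∀ F : Set V, (F → A) → ℝ} [G.LocallyFinite]
    (hU₁ : IsNNInteraction G U₁) (hU₂ : IsNNInteraction G U₂) {x y : V → A}
    (hxy : {v | x v ≠ y v}.Finite) :
    gibbsSum (U₁ + U₂) x y = gibbsSum U₁ x y + gibbsSum U₂ x y := by
  rw [gibbsSum, gibbsSum, gibbsSum, ← finsum_add_distrib (finite_support_gibbsTerm hU₁ hxy)
    (finite_support_gibbsTerm hU₂ hxy)]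
  exact finsum_congr fun F => by simp only [Pi.add_apply]; ring

lemma gibbsSum_eq_of_markovSimilar (hU : IsNNInteraction G U) {x y z w : V → A}
    (h : MarkovSimilar G x y z w) : gibbsSum U x y = gibbsSum U z w := by
  obtain ⟨S, -, hout, hin⟩ := h
  refine finsum_congr fun F => ?_
  by_cases hcl : F.Finite ∧ G.IsClique F
  · by_cases hFS : ∃ a ∈ F, a ∈ S
    · obtain ⟨a, haF, haS⟩ := hFS
      have hsub : ∀ b ∈ F, b ∈ S ∪ boundary G S := fun b hb => by
        by_cases hbS : b ∈ S
        · exact Or.inl hbS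
        · exact Or.inr ⟨hbS, a, haS, hcl.2 hb haF fun hab => hbS (hab ▸ haS)⟩
      rw [show F.restrict x = F.restrict z from funext fun b => (hin b (hsub b b.2)).1,
        show F.restrict y = F.restrict w from funext fun b => (hin b (hsub b b.2)).2]
    · push Not at hFS
      rw [show F.restrict y = F.restrict x from funext fun b => ((hout b (hFS b b.2)).1).symm,
        show F.restrict w = F.restrict z from funext fun b => ((hout b (hFS b b.2)).2).symm]
      simp
  · simp [hU F hcl]

lemma gibbsSum_confAct {S : Subgroup (Equiv.Perm V)} (hU : InvariantInteraction S U)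
    {g : Equiv.Perm V} (hg : g ∈ S) (x y : V → A) :
    gibbsSum U (confAct g x) (confAct g y) = gibbsSum U x y := by
  rw [gibbsSum, gibbsSum, ← finsum_comp_equiv (Equiv.Set.congr g)]
  exact finsum_congr fun F => congr_arg₂ (· - ·) (hU g hg F y) (hU g hg F x)

end GibbsSum

section Cocycles

lemma mem_Delta_trans {X : Set (V → A)} {x y z : V → A} (hxy : (x, y) ∈ Delta X)
    (hyz : (y, z) ∈ Delta X) : (x, z) ∈ Delta X := by
  refine ⟨hxy.1, hyz.2.1, (hxy.2.2.union hyz.2.2).subset fun v hv => ?_⟩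
  by_contra h
  simp only [Set.mem_union, Set.mem_ofPred_eq, not_or, not_not] at h
  exact hv (h.1.trans h.2)

def IsCocycle (X : Set (V → A)) (E : (V → A) → (V → A) → ℝ) : Prop :=
  ∀ x y z, (x, y) ∈ Delta X → (y, z) ∈ Delta X → E x z = E x y + E y z

variable {X : Set (V → A)}

lemma IsCocycle.apply_self {E : (V → A) → (V → A) → ℝ} (hE : IsCocycle X E) {x : V → A}
    (hx : x ∈ X) : E x x = 0 := by
  have hxx : (x, x) ∈ Delta X := ⟨hx, hx, by simp⟩
  linarith [hE x x x hxx hxx]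

lemma IsCocycle.apply_swap {E : (V → A) → (V → A) → ℝ} (hE : IsCocycle X E) {x y : V → A}
    (hxy : (x, y) ∈ Delta X) : E y x = -E x y := by
  have hyx : (y, x) ∈ Delta X := ⟨hxy.2.1, hxy.1, by simpa only [ne_comm] using hxy.2.2⟩
  linarith [hE x y x hxy hyx, hE.apply_self hxy.1]

lemma IsMarkovCocycle.isCocycle_sub_gibbsSum {G : SimpleGraph V} [G.LocallyFinite]
    {M : (V → A) → (V → A) → ℝ} (hM : IsMarkovCocycle G X M) {U : ∀ F : Set V, (F → A) → ℝ}
    (hU : IsNNInteraction G U) : IsCocycle X fun x y => M x y - gibbsSum U x y :=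
  fun x y z hxy hyz => by
    dsimp only
    rw [hM.2.1 x y z hxy hyz, ← gibbsSum_add_gibbsSum hU hxy.2.2 hyz.2.2]
    ring

lemma confAct_inv_confAct (g : Equiv.Perm V) (x : V → A) : confAct g⁻¹ (confAct g x) = x := by
  funext v
  simp [confAct]

lemma confAct_confAct_inv (g : Equiv.Perm V) (x : V → A) : confAct g (confAct g⁻¹ x) = x := by
  simpa using confAct_inv_confAct g⁻¹ x

lemma confAct_surjective (g : Equiv.Perm V) : Function.Surjective (confAct g : (V → A) → V → A) :=
  fun x => ⟨_, confAct_confAct_inv g x⟩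

lemma confAct_apply_apply (g : Equiv.Perm V) (x : V → A) (v : V) : confAct g x (g v) = x v := by
  simp [confAct]

variable {S : Subgroup (Equiv.Perm V)}

lemma confAct_mem_Delta (hX : InvariantSpace S X) {g : Equiv.Perm V} (hg : g ∈ S) {x y : V → A}
    (h : (x, y) ∈ Delta X) : (confAct g x, confAct g y) ∈ Delta X := by
  refine ⟨hX g hg ▸ Set.mem_image_of_mem _ h.1, hX g hg ▸ Set.mem_image_of_mem _ h.2.1, ?_⟩
  exact (h.2.2.image g).subset fun v hv => ⟨g⁻¹ v, hv, by simp⟩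

lemma confAct_mem_Delta_iff (hX : InvariantSpace S X) {g : Equiv.Perm V} (hg : g ∈ S)
    {x y : V → A} : (confAct g x, confAct g y) ∈ Delta X ↔ (x, y) ∈ Delta X := by
  refine ⟨fun h => ?_, confAct_mem_Delta hX hg⟩
  simpa only [confAct_inv_confAct] using confAct_mem_Delta hX (S.inv_mem hg) h

variable {G : SimpleGraph V} [G.LocallyFinite]

lemma gibbsSet_subset_markovSet : gibbsSet G X ⊆ markovSet G X := by
  rintro M ⟨h0, U, hU, hM⟩
  refine ⟨h0, fun x y z hxy hyz => ?_, fun x y z w hxy hzw hsim => ?_⟩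
  · rw [hM _ _ hxy, hM _ _ hyz, hM _ _ (mem_Delta_trans hxy hyz)]
    exact (gibbsSum_add_gibbsSum hU hxy.2.2 hyz.2.2).symm
  · rw [hM _ _ hxy, hM _ _ hzw]
    exact gibbsSum_eq_of_markovSimilar hU hsim

lemma gibbsSetInv_subset_markovSetInv (hX : InvariantSpace S X) :
    gibbsSetInv G S X ⊆ markovSetInv G S X := by
  rintro M ⟨h0, U, hU, hUinv, hM⟩
  refine ⟨gibbsSet_subset_markovSet ⟨h0, U, hU, hM⟩, fun g hg x y => ?_⟩
  by_cases hxy : (x, y) ∈ Delta X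
  · rw [hM _ _ (confAct_mem_Delta hX hg hxy), hM _ _ hxy, gibbsSum_confAct hUinv hg]
  · rw [h0 _ _ hxy, h0 _ _ (mt (confAct_mem_Delta_iff hX hg).1 hxy)]

end Cocycles

section Interactions

noncomputable def siteInteraction (f : V → A → ℝ) : ∀ F : Set V, (F → A) → ℝ :=
  fun F p => if F.ncard = 1 then ∑ᶠ v : F, f v (p v) else 0

noncomputable def edgeInteraction (G : SimpleGraph V) (J : V → V → A → A → ℝ) :
    ∀ F : Set V, (F → A) → ℝ :=
  fun F p => if F.ncard = 2 then ∑ᶠ (v : F) (w : F), if G.Adj v w then J v w (p v) (p w) else 0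
    else 0

variable {G : SimpleGraph V}

lemma siteInteraction_singleton (f : V → A → ℝ) (v : V) (x : V → A) :
    siteInteraction f {v} (Set.restrict {v} x) = f v (x v) := by
  simp only [siteInteraction, Set.ncard_singleton, if_true, Set.restrict, Set.domRestrict_apply]
  rw [finsum_set_coe_eq_finsum_mem (f := fun a => f a (x a)), finsum_mem_singleton]

lemma edgeInteraction_pair (J : V → V → A → A → ℝ) {v w : V} (hvw : G.Adj v w) (x : V → A) :
    edgeInteraction G J {v, w} (Set.restrict {v, w} x) =
      J v w (x v) (x w) + J w v (x w) (x v) := by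
  simp only [edgeInteraction, Set.ncard_pair hvw.ne, if_true, Set.restrict, Set.domRestrict_apply]
  rw [finsum_set_coe_eq_finsum_mem
      (f := fun a => ∑ᶠ c : ({v, w} : Set V), if G.Adj a c then J a c (x a) (x c) else 0),
    finsum_mem_pair hvw.ne,
    finsum_set_coe_eq_finsum_mem (f := fun c => if G.Adj v c then J v c (x v) (x c) else 0),
    finsum_set_coe_eq_finsum_mem (f := fun c => if G.Adj w c then J w c (x w) (x c) else 0),
    finsum_mem_pair hvw.ne, finsum_mem_pair hvw.ne]
  simp [hvw, hvw.symm]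

lemma isNNInteraction_siteInteraction (f : V → A → ℝ) :
    IsNNInteraction G (siteInteraction f) := by
  intro F hF p
  rw [siteInteraction, if_neg]
  intro h
  obtain ⟨v, rfl⟩ := Set.ncard_eq_one.1 h
  exact hF ⟨Set.finite_singleton v, G.isClique_singleton v⟩

lemma isNNInteraction_edgeInteraction (J : V → V → A → A → ℝ) :
    IsNNInteraction G (edgeInteraction G J) := by
  intro F hF p
  rw [edgeInteraction]
  split_ifs with h
  · obtain ⟨v, w, -, rfl⟩ := Set.ncard_eq_two.1 h
    refine finsum_eq_zero_of_forall_eq_zero fun a => finsum_eq_zero_of_forall_eq_zero fun b =>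
      if_neg fun hab => hF ⟨Set.toFinite _, SimpleGraph.isClique_pair.2 fun _ => ?_⟩
    obtain ⟨a, ha⟩ := a
    obtain ⟨b, hb⟩ := b
    simp only [Set.mem_insert_iff, Set.mem_singleton_iff] at ha hb
    rcases ha with rfl | rfl <;> rcases hb with rfl | rfl
    exacts [absurd hab (G.irrefl), hab, hab.symm, absurd hab (G.irrefl)]
  · rfl

variable {S : Subgroup (Equiv.Perm V)}

lemma invariantInteraction_siteInteraction {f : V → A → ℝ}
    (hf : ∀ g ∈ S, ∀ v c, f (g v) c = f v c) : InvariantInteraction S (siteInteraction f) := by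
  intro g hg F x
  simp only [siteInteraction, Set.ncard_image_of_injective F g.injective]
  congr 1
  rw [← finsum_comp_equiv (Equiv.Set.image g F g.injective)]
  exact finsum_congr fun a => by simp [Set.restrict, confAct, hf g hg]

lemma invariantInteraction_edgeInteraction (hS : PreservesAdj G S) {J : V → V → A → A → ℝ}
    (hJ : ∀ g ∈ S, ∀ v w, G.Adj v w → ∀ c d, J (g v) (g w) c d = J v w c d) :
    InvariantInteraction S (edgeInteraction G J) := by
  intro g hg F x
  simp only [edgeInteraction, Set.ncard_image_of_injective F g.injective]
  congr 1
  rw [← finsum_comp_equiv (Equiv.Set.image g F g.injective)]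
  refine finsum_congr fun a => ?_
  rw [← finsum_comp_equiv (Equiv.Set.image g F g.injective)]
  refine finsum_congr fun b => ?_
  simp only [Set.restrict, Set.domRestrict_apply, Equiv.Set.image_apply, confAct, hS g hg]
  split_ifs with h
  · simp [hJ g hg _ _ h]
  · rfl

lemma gibbsSum_siteInteraction (f : V → A → ℝ) {x y : V → A} {D : Finset V}
    (hD : ∀ v, x v ≠ y v → v ∈ D) :
    gibbsSum (siteInteraction f) x y = ∑ v ∈ D, (f v (y v) - f v (x v)) := by
  rw [gibbsSum, finsum_eq_sum_of_support_subset (s := D.image fun v => ({v} : Set V)),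
    Finset.sum_image fun a _ b _ h => Set.singleton_injective h]
  · simp only [siteInteraction_singleton]
  intro F hF
  by_cases h1 : F.ncard = 1
  · obtain ⟨a, rfl⟩ := Set.ncard_eq_one.1 h1
    rw [Function.mem_support, siteInteraction_singleton, siteInteraction_singleton] at hF
    exact Finset.mem_image_of_mem _ (hD a fun h => hF (by rw [h, sub_self]))
  · rw [Function.mem_support, siteInteraction, siteInteraction, if_neg h1, if_neg h1,
      sub_self] at hF
    exact absurd rfl hF

lemma gibbsSum_edgeInteraction_update [G.LocallyFinite] (J : V → V → A → A → ℝ) (x : V → A)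
    (v : V) (b : A) :
    gibbsSum (edgeInteraction G J) x (Function.update x v b) =
      ∑ w ∈ G.neighborFinset v,
        ((J v w b (x w) + J w v (x w) b) - (J v w (x v) (x w) + J w v (x w) (x v))) := by
  rw [gibbsSum, finsum_eq_sum_of_support_subset
      (s := (G.neighborFinset v).image fun w => ({v, w} : Set V)),
    Finset.sum_image]
  · refine Finset.sum_congr rfl fun w hw => ?_
    have hvw := (G.mem_neighborFinset v w).1 hw
    rw [edgeInteraction_pair J hvw, edgeInteraction_pair J hvw, Function.update_self,
      Function.update_of_ne hvw.ne']
  · intro w hw w' hw' h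
    rcases Set.pair_eq_pair_iff.1 h with ⟨-, h⟩ | ⟨-, h⟩
    · exact h
    · subst h
      exact absurd ((G.mem_neighborFinset _ _).1 hw) G.irrefl
  intro F hF
  obtain ⟨hcl, u, huF, hu⟩ := support_gibbsTerm_subset (isNNInteraction_edgeInteraction J) hF
  obtain rfl : u = v := by
    by_contra h
    exact hu (Function.update_of_ne h _ _).symm
  by_cases h2 : F.ncard = 2
  · obtain ⟨a, c, hac, rfl⟩ := Set.ncard_eq_two.1 h2
    have hadj : G.Adj a c := hcl (by simp) (by simp) hac
    simp only [Finset.coe_image, Set.mem_image, Finset.mem_coe, SimpleGraph.mem_neighborFinset]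
    rcases huF with rfl | rfl
    · exact ⟨c, hadj, rfl⟩
    · exact ⟨a, hadj.symm, Set.pair_comm _ _⟩
  · simp [edgeInteraction, h2] at hF

end Interactions

section WitnessValue

variable {α β : Type*}

noncomputable def witnessValue (S : Set α) (F : α → ℝ) : ℝ :=
  if h : S.Nonempty then F h.some else 0

lemma witnessValue_eq {S : Set α} {F : α → ℝ} (hF : ∀ x ∈ S, ∀ y ∈ S, F x = F y) {x : α}
    (hx : x ∈ S) : witnessValue S F = F x := by
  rw [witnessValue, dif_pos ⟨x, hx⟩]
  exact hF _ (Set.Nonempty.some_mem _) _ hx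

lemma witnessValue_congr {S : Set α} {F F' : α → ℝ} (h : Set.EqOn F F' S) :
    witnessValue S F = witnessValue S F' := by
  unfold witnessValue
  split_ifs with hS
  · exact h hS.some_mem
  · rfl

lemma witnessValue_neg (S : Set α) (F : α → ℝ) :
    witnessValue S (fun x => -F x) = -witnessValue S F := by
  unfold witnessValue
  split_ifs <;> simp

lemma witnessValue_comp {S : Set α} {T : Set β} {F : α → ℝ} {F' : β → ℝ} {e : α → β}
    (he : e.Surjective) (hST : ∀ x, e x ∈ T ↔ x ∈ S) (hF' : ∀ y ∈ T, ∀ y' ∈ T, F' y = F' y')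
    (hF : ∀ x ∈ S, F' (e x) = F x) : witnessValue T F' = witnessValue S F := by
  by_cases hS : S.Nonempty
  · obtain ⟨x, hx⟩ := hS
    rw [witnessValue_eq hF' ((hST x).2 hx), hF x hx, witnessValue_eq _ hx]
    intro a ha b hb
    rw [← hF a ha, ← hF b hb]
    exact hF' _ ((hST a).2 ha) _ ((hST b).2 hb)
  · have hT : ¬T.Nonempty := by
      rintro ⟨y, hy⟩
      obtain ⟨x, rfl⟩ := he y
      exact hS ⟨x, (hST x).1 hy⟩
    simp only [witnessValue, dif_neg hS, dif_neg hT]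

end WitnessValue

section HomC4

/-- A symbol `c : Fin 4` is read as a parity `c % 2` and a bit (`2 ≤ c`): `C₄`-adjacency sees only
parities, `c + 2` flips the bit and `swapParity` the parity. -/
def parity (c : Fin 4) : Fin 2 := ⟨c.val % 2, by omega⟩

def swapParity (c : Fin 4) : Fin 4 := ![1, 0, 3, 2] c

lemma C4_adj_iff (a b : Fin 4) : C4.Adj a b ↔ parity a ≠ parity b := by
  rw [C4, SimpleGraph.fromRel_adj]
  revert a b
  decide

lemma parity_add_two (c : Fin 4) : parity (c + 2) = parity c := by revert c; decide

lemma add_two_add_two (c : Fin 4) : c + 2 + 2 = c := by revert c; decide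

lemma two_le_add_two_iff (c : Fin 4) : 2 ≤ c + 2 ↔ ¬2 ≤ c := by revert c; decide

lemma eq_add_two_of_parity_eq {a b : Fin 4} (h : parity a = parity b) (hne : a ≠ b) :
    b = a + 2 := by
  revert a b; decide

lemma eq_of_parity_eq_of_lt_two {a b : Fin 4} (h : parity a = parity b) (ha : a < 2)
    (hb : b < 2) : a = b := by
  revert a b; decide

lemma parity_swapParity_ne (c : Fin 4) : parity (swapParity c) ≠ parity c := by revert c; decide

lemma parity_swapParity_ne_of_ne {a b : Fin 4} (h : parity a ≠ parity b) :
    parity (swapParity a) ≠ parity (swapParity b) := by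
  revert a b; decide

lemma swapParity_swapParity (c : Fin 4) : swapParity (swapParity c) = c := by revert c; decide

lemma swapParity_add_two (c : Fin 4) : swapParity (c + 2) = swapParity c + 2 := by
  revert c; decide

lemma fin_two_eq_of_ne_of_ne {a b c : Fin 2} (hab : a ≠ b) (hbc : b ≠ c) : a = c := by
  revert a b c; decide

variable {G : SimpleGraph V}

lemma mem_homSpace_C4 {x : V → Fin 4} :
    x ∈ homSpace G C4 ↔ ∀ v w, G.Adj v w → parity (x v) ≠ parity (x w) := by
  simp only [homSpace, Set.mem_ofPred_eq, C4_adj_iff]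

lemma mem_homSpace_C4_of_parity_eq {x y : V → Fin 4} (hx : x ∈ homSpace G C4)
    (h : ∀ v, parity (y v) = parity (x v)) : y ∈ homSpace G C4 := by
  rw [mem_homSpace_C4] at hx ⊢
  intro v w hvw
  rw [h, h]
  exact hx v w hvw

lemma not_adj_of_mem_homSpace_C4 {x : V → Fin 4} (hx : x ∈ homSpace G C4) {u v w : V}
    (huv : G.Adj u v) (hvw : G.Adj v w) : ¬G.Adj u w := fun huw =>
  mem_homSpace_C4.1 hx u w huw
    (fin_two_eq_of_ne_of_ne (mem_homSpace_C4.1 hx u v huv) (mem_homSpace_C4.1 hx v w hvw))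

lemma parity_eq_of_adj {x y : V → Fin 4} (hx : x ∈ homSpace G C4) (hy : y ∈ homSpace G C4)
    {v w : V} (hvw : G.Adj v w) (h : parity (x v) = parity (y v)) :
    parity (x w) = parity (y w) :=
  fin_two_eq_of_ne_of_ne (mem_homSpace_C4.1 hx v w hvw).symm (h ▸ mem_homSpace_C4.1 hy v w hvw)

lemma parity_eq_of_reachable {x y : V → Fin 4} (hx : x ∈ homSpace G C4)
    (hy : y ∈ homSpace G C4) {v w : V} (hvw : G.Reachable v w)
    (h : parity (x v) = parity (y v)) : parity (x w) = parity (y w) := by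
  obtain ⟨p⟩ := hvw
  induction p with
  | nil => exact h
  | cons hadj _ ih => exact ih (parity_eq_of_adj hx hy hadj h)

lemma parity_eq_of_mem_supp {x y : V → Fin 4} (hx : x ∈ homSpace G C4)
    (hy : y ∈ homSpace G C4) {K : G.ConnectedComponent} {v w : V} (hv : v ∈ K.supp)
    (hw : w ∈ K.supp) (h : parity (x v) = parity (y v)) : parity (x w) = parity (y w) :=
  parity_eq_of_reachable hx hy (SimpleGraph.ConnectedComponent.eq.1
    (((K.mem_supp_iff v).1 hv).trans ((K.mem_supp_iff w).1 hw).symm)) h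

lemma boundary_supp (K : G.ConnectedComponent) : boundary G K.supp = ∅ :=
  Set.eq_empty_of_forall_notMem fun _ ⟨hu, _, hv, huv⟩ => hu ((K.mem_supp_congr_adj huv).2 hv)

noncomputable def bitFlip (x : V → Fin 4) (v : V) : V → Fin 4 :=
  Function.update x v (x v + 2)

noncomputable def parityFlip (C : Set V) (x : V → Fin 4) : V → Fin 4 :=
  C.piecewise (fun v => swapParity (x v)) x

@[simp]
lemma bitFlip_self (x : V → Fin 4) (v : V) : bitFlip x v v = x v + 2 :=
  Function.update_self _ _ _

lemma bitFlip_of_ne (x : V → Fin 4) {u v : V} (h : u ≠ v) : bitFlip x v u = x u :=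
  Function.update_of_ne h _ _

lemma parityFlip_of_mem {C : Set V} (x : V → Fin 4) {w : V} (h : w ∈ C) :
    parityFlip C x w = swapParity (x w) :=
  Set.piecewise_eq_of_mem _ _ _ h

lemma parityFlip_of_notMem {C : Set V} (x : V → Fin 4) {w : V} (h : w ∉ C) :
    parityFlip C x w = x w :=
  Set.piecewise_eq_of_notMem _ _ _ h

lemma bitFlip_mem {x : V → Fin 4} (hx : x ∈ homSpace G C4) (v : V) :
    bitFlip x v ∈ homSpace G C4 := by
  refine mem_homSpace_C4_of_parity_eq hx fun w => ?_
  rcases eq_or_ne w v with rfl | hwv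
  · rw [bitFlip_self, parity_add_two]
  · rw [bitFlip_of_ne x hwv]

lemma bitFlip_bitFlip (x : V → Fin 4) (v : V) : bitFlip (bitFlip x v) v = x := by
  simp [bitFlip, add_two_add_two]

lemma bitFlip_mem_iff {x : V → Fin 4} {v : V} :
    bitFlip x v ∈ homSpace G C4 ↔ x ∈ homSpace G C4 := by
  refine ⟨fun h => ?_, fun h => bitFlip_mem h v⟩
  rw [← bitFlip_bitFlip x v]
  exact bitFlip_mem h v

lemma bitFlip_comm (x : V → Fin 4) (u v : V) :
    bitFlip (bitFlip x u) v = bitFlip (bitFlip x v) u := by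
  rcases eq_or_ne u v with rfl | huv
  · rfl
  · simp only [bitFlip, Function.update_of_ne huv, Function.update_of_ne huv.symm]
    exact Function.update_comm huv _ _ x

lemma bitFlip_eqOn {x x' : V → Fin 4} {T : Set V} (h : Set.EqOn x x' T) (v : V)
    (hv : x v = x' v) : Set.EqOn (bitFlip x v) (bitFlip x' v) T := fun u hu => by
  rcases eq_or_ne u v with rfl | huv
  · simp [hv]
  · simp [bitFlip_of_ne _ huv, h hu]

lemma parityFlip_mem (K : G.ConnectedComponent) {x : V → Fin 4} (hx : x ∈ homSpace G C4) :
    parityFlip K.supp x ∈ homSpace G C4 := by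
  rw [mem_homSpace_C4] at hx ⊢
  intro v w hvw
  by_cases hv : v ∈ K.supp
  · rw [parityFlip_of_mem x hv, parityFlip_of_mem x ((K.mem_supp_congr_adj hvw).1 hv)]
    exact parity_swapParity_ne_of_ne (hx v w hvw)
  · rw [parityFlip_of_notMem x hv,
      parityFlip_of_notMem x fun hw => hv ((K.mem_supp_congr_adj hvw).2 hw)]
    exact hx v w hvw

lemma parityFlip_parityFlip (C : Set V) (x : V → Fin 4) :
    parityFlip C (parityFlip C x) = x := by
  funext w
  by_cases hw : w ∈ C <;> simp [parityFlip, hw, swapParity_swapParity]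

lemma parityFlip_bitFlip (C : Set V) (x : V → Fin 4) (v : V) :
    parityFlip C (bitFlip x v) = bitFlip (parityFlip C x) v := by
  funext w
  by_cases hw : w ∈ C <;> rcases eq_or_ne w v with rfl | hwv <;>
    simp [parityFlip, bitFlip, swapParity_add_two, Function.update_of_ne, *]

lemma finite_diff_bitFlip (x : V → Fin 4) (v : V) : {w | x w ≠ bitFlip x v w}.Finite :=
  (Set.finite_singleton v).subset fun _ hw => by_contra fun h => hw (bitFlip_of_ne x h).symm

lemma mem_Delta_bitFlip {x : V → Fin 4} (hx : x ∈ homSpace G C4) (v : V) :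
    (x, bitFlip x v) ∈ Delta (homSpace G C4) :=
  ⟨hx, bitFlip_mem hx v, finite_diff_bitFlip x v⟩

lemma mem_Delta_parityFlip {K : G.ConnectedComponent} (hK : K.supp.Finite)
    {x : V → Fin 4} (hx : x ∈ homSpace G C4) :
    (x, parityFlip K.supp x) ∈ Delta (homSpace G C4) :=
  ⟨hx, parityFlip_mem K hx, hK.subset fun _ hw =>
    by_contra fun h => hw (parityFlip_of_notMem x h).symm⟩

end HomC4

section Generation

variable {G : SimpleGraph V} {E : (V → Fin 4) → (V → Fin 4) → ℝ}

lemma IsCocycle.eq_zero_of_parity_eq (hE : IsCocycle (homSpace G C4) E)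
    (hbit : ∀ x ∈ homSpace G C4, ∀ v, E x (bitFlip x v) = 0) {x y : V → Fin 4}
    (hxy : (x, y) ∈ Delta (homSpace G C4)) (hpar : ∀ v, parity (x v) = parity (y v)) :
    E x y = 0 := by
  obtain ⟨hx, hy, hfin⟩ := hxy
  refine Set.Finite.induction_on (motive := fun D _ => ∀ x ∈ homSpace G C4,
      (∀ v, parity (x v) = parity (y v)) → {v | x v ≠ y v} ⊆ D → E x y = 0) _ hfin ?_ ?_ x hx
    hpar subset_rfl
  · intro x _ _ hsub
    obtain rfl : x = y := funext fun v => by_contra fun h => hsub h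
    exact hE.apply_self hy
  · intro a D _ hD ih x hx hpar hsub
    by_cases hxa : x a = y a
    · exact ih x hx hpar fun v hv => (hsub hv).resolve_left (by rintro rfl; exact hv hxa)
    have hza : bitFlip x a a = y a := by
      rw [bitFlip_self, eq_add_two_of_parity_eq (hpar a) hxa]
    have hsub' : {v | bitFlip x a v ≠ y v} ⊆ D := fun v hv => by
      rcases eq_or_ne v a with rfl | hva
      · exact absurd hza hv
      · rw [Set.mem_ofPred_eq, bitFlip_of_ne x hva] at hv
        exact (hsub hv).resolve_left hva
    have hpar' : ∀ v, parity (bitFlip x a v) = parity (y v) := fun v => by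
      rcases eq_or_ne v a with rfl | hva
      · rw [hza]
      · rw [bitFlip_of_ne x hva, hpar]
    rw [hE x _ y (mem_Delta_bitFlip hx a) ⟨bitFlip_mem hx a, hy, hD.subset hsub'⟩, hbit x hx a,
      ih _ (bitFlip_mem hx a) hpar' hsub', add_zero]

lemma IsCocycle.eq_zero (hE : IsCocycle (homSpace G C4) E)
    (hbit : ∀ x ∈ homSpace G C4, ∀ v, E x (bitFlip x v) = 0)
    (hcomp : ∀ x ∈ homSpace G C4, ∀ K : G.ConnectedComponent, K.supp.Finite →
      E x (parityFlip K.supp x) = 0)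
    {x y : V → Fin 4} (hxy : (x, y) ∈ Delta (homSpace G C4)) : E x y = 0 := by
  have hfin : {v | parity (x v) ≠ parity (y v)}.Finite :=
    hxy.2.2.subset fun v hv h => hv (congrArg parity h)
  refine Set.Finite.induction_on (motive := fun P _ => ∀ x, (x, y) ∈ Delta (homSpace G C4) →
      {v | parity (x v) ≠ parity (y v)} ⊆ P → E x y = 0) _ hfin ?_ ?_ x hxy subset_rfl
  · intro x hxy hsub
    exact hE.eq_zero_of_parity_eq hbit hxy fun v => by_contra fun h => hsub h
  · intro a P _ _ ih x hxy hsub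
    obtain ⟨hx, hy, hdiff⟩ := hxy
    by_cases hxa : parity (x a) = parity (y a)
    · exact ih x ⟨hx, hy, hdiff⟩ fun v hv => (hsub hv).resolve_left (by rintro rfl; exact hv hxa)
    set K := G.connectedComponentMk a
    have hK : ∀ w ∈ K.supp, parity (x w) ≠ parity (y w) := fun w hw h =>
      hxa (parity_eq_of_mem_supp hx hy hw ((K.mem_supp_iff a).2 rfl) h)
    have hKfin : K.supp.Finite := hdiff.subset fun w hw h => hK w hw (congrArg parity h)
    have hsub' : {w | parity (parityFlip K.supp x w) ≠ parity (y w)} ⊆ P := fun w hw => by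
      by_cases hwK : w ∈ K.supp
      · rw [Set.mem_ofPred_eq, parityFlip_of_mem x hwK] at hw
        exact absurd (fin_two_eq_of_ne_of_ne (parity_swapParity_ne _) (hK w hwK)) hw
      · rw [Set.mem_ofPred_eq, parityFlip_of_notMem x hwK] at hw
        exact (hsub hw).resolve_left fun h => hwK (h ▸ rfl)
    have hzy : (parityFlip K.supp x, y) ∈ Delta (homSpace G C4) := by
      refine ⟨parityFlip_mem K hx, hy, (hdiff.union hKfin).subset fun w hw => ?_⟩
      by_cases hwK : w ∈ K.supp
      · exact Or.inr hwK
      · exact Or.inl fun h => hw ((parityFlip_of_notMem x hwK).trans h)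
    rw [hE x _ y (mem_Delta_parityFlip hKfin hx) hzy, hcomp x hx K hKfin, ih _ hzy hsub',
      add_zero]

end Generation

section BitIncrement

variable {G : SimpleGraph V} {M : (V → Fin 4) → (V → Fin 4) → ℝ}

noncomputable def bitIncr (M : (V → Fin 4) → (V → Fin 4) → ℝ) (x : V → Fin 4) (v : V) : ℝ :=
  M x (bitFlip x v)

variable (hM : IsMarkovCocycle G (homSpace G C4) M)
include hM

lemma IsMarkovCocycle.bitIncr_congr {x x' : V → Fin 4} (hx : x ∈ homSpace G C4)
    (hx' : x' ∈ homSpace G C4) {v : V} (h : Set.EqOn x x' (insert v (G.neighborSet v))) :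
    bitIncr M x v = bitIncr M x' v := by
  refine hM.2.2 _ _ _ _ (mem_Delta_bitFlip hx v) (mem_Delta_bitFlip hx' v)
    ⟨{v}, Set.finite_singleton v, fun u hu => ?_, fun u hu => ?_⟩
  · exact ⟨(bitFlip_of_ne x hu).symm, (bitFlip_of_ne x' hu).symm⟩
  · have hu' : u ∈ insert v (G.neighborSet v) := by
      rcases hu with rfl | ⟨-, w, rfl, huw⟩
      exacts [Set.mem_insert _ _, Or.inr huw.symm]
    exact ⟨h hu', bitFlip_eqOn h v (h (Set.mem_insert v _)) hu'⟩

lemma IsMarkovCocycle.bitIncr_bitFlip {x : V → Fin 4} (hx : x ∈ homSpace G C4) (v : V) :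
    bitIncr M (bitFlip x v) v = -bitIncr M x v := by
  rw [bitIncr, bitIncr, bitFlip_bitFlip]
  exact IsCocycle.apply_swap hM.2.1 (mem_Delta_bitFlip hx v)

lemma IsMarkovCocycle.bitIncr_sub_bitIncr_comm {x : V → Fin 4} (hx : x ∈ homSpace G C4)
    (u v : V) :
    bitIncr M x v - bitIncr M (bitFlip x u) v = bitIncr M x u - bitIncr M (bitFlip x v) u := by
  have h₁ := hM.2.1 _ _ _ (mem_Delta_bitFlip hx u) (mem_Delta_bitFlip (bitFlip_mem hx u) v)
  have h₂ := hM.2.1 _ _ _ (mem_Delta_bitFlip hx v) (mem_Delta_bitFlip (bitFlip_mem hx v) u)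
  simp only [bitIncr]
  rw [bitFlip_comm x u v] at h₁ ⊢
  linarith

/-- Glue `x` near `v` to `x'` elsewhere, then use the commutation of the flips at `v` and `u` to pass
from the neighbourhood of `v` to that of `u`: as there are no triangles, the only site of the latter
that the gluing touches besides `u` is `v`. -/
lemma IsMarkovCocycle.bitIncr_sub_bitIncr_congr {x x' : V → Fin 4} (hx : x ∈ homSpace G C4)
    (hx' : x' ∈ homSpace G C4) {v u : V} (hvu : G.Adj v u) (hv : x v = x' v) (hu : x u = x' u) :
    bitIncr M x v - bitIncr M (bitFlip x u) v = bitIncr M x' v - bitIncr M (bitFlip x' u) v := by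
  set T := insert v (G.neighborSet v)
  set z := T.piecewise x x'
  have hzT : Set.EqOn x z T := (Set.piecewise_eqOn T x x').symm
  have hz : z ∈ homSpace G C4 := by
    refine mem_homSpace_C4_of_parity_eq hx' fun w => ?_
    by_cases hw : w ∈ T
    · rw [← hzT hw]
      rcases hw with rfl | hw
      · rw [hv]
      · exact parity_eq_of_adj hx hx' hw (congrArg parity hv)
    · simp only [z, Set.piecewise_eq_of_notMem _ _ _ hw]
  have hzu : Set.EqOn z x' (insert u (G.neighborSet u)) := fun w hw => by
    by_cases hwT : w ∈ T
    · rw [← hzT hwT]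
      rcases hw with rfl | hw
      · exact hu
      rcases hwT with rfl | hwv
      · exact hv
      · exact absurd hwv (not_adj_of_mem_homSpace_C4 hx hvu hw)
    · simp only [z, Set.piecewise_eq_of_notMem _ _ _ hwT]
  have hzv : z v = x v := (hzT (Set.mem_insert v _)).symm
  have hzu' : z u = x u := (hzT (Or.inr hvu)).symm
  rw [hM.bitIncr_congr hx hz hzT,
    hM.bitIncr_congr (bitFlip_mem hx u) (bitFlip_mem hz u) (bitFlip_eqOn hzT u hzu'.symm),
    hM.bitIncr_sub_bitIncr_comm hz, hM.bitIncr_sub_bitIncr_comm hx',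
    hM.bitIncr_congr hz hx' hzu,
    hM.bitIncr_congr (bitFlip_mem hz v) (bitFlip_mem hx' v) (bitFlip_eqOn hzu v (hzv.trans hv))]

end BitIncrement

section SiteAndPairIncrements

variable (G : SimpleGraph V) (M : (V → Fin 4) → (V → Fin 4) → ℝ)

noncomputable def siteIncr (v : V) (c : Fin 4) : ℝ :=
  witnessValue {x | x ∈ homSpace G C4 ∧ x v = c ∧ ∀ u, G.Adj v u → x u < 2}
    fun x => bitIncr M x v

noncomputable def pairIncr (v u : V) (c d : Fin 4) : ℝ :=
  witnessValue {x | x ∈ homSpace G C4 ∧ x v = c ∧ x u = d}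
    fun x => bitIncr M x v - bitIncr M (bitFlip x u) v

variable {G M} (hM : IsMarkovCocycle G (homSpace G C4) M)
include hM

lemma IsMarkovCocycle.siteIncr_eq {x : V → Fin 4} (hx : x ∈ homSpace G C4) {v : V}
    (hlow : ∀ u, G.Adj v u → x u < 2) : siteIncr G M v (x v) = bitIncr M x v := by
  refine witnessValue_eq (fun y hy z hz => hM.bitIncr_congr hy.1 hz.1 fun w hw => ?_)
    ⟨hx, rfl, hlow⟩
  rcases hw with rfl | hw
  · exact hy.2.1.trans hz.2.1.symm
  · exact eq_of_parity_eq_of_lt_two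
      (parity_eq_of_adj hy.1 hz.1 hw (congrArg parity (hy.2.1.trans hz.2.1.symm)))
      (hy.2.2 w hw) (hz.2.2 w hw)

lemma IsMarkovCocycle.pairIncr_eq {x : V → Fin 4} (hx : x ∈ homSpace G C4) {v u : V}
    (hvu : G.Adj v u) :
    pairIncr G M v u (x v) (x u) = bitIncr M x v - bitIncr M (bitFlip x u) v :=
  witnessValue_eq (fun _ hy _ hz => hM.bitIncr_sub_bitIncr_congr hy.1 hz.1 hvu
    (hy.2.1.trans hz.2.1.symm) (hy.2.2.trans hz.2.2.symm)) ⟨hx, rfl, rfl⟩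

lemma IsMarkovCocycle.siteIncr_add_two (v : V) (c : Fin 4) :
    siteIncr G M v (c + 2) = -siteIncr G M v c := by
  rw [siteIncr, siteIncr, ← witnessValue_neg]
  refine witnessValue_comp (e := (bitFlip · v)) (fun y => ⟨bitFlip y v, bitFlip_bitFlip y v⟩)
    (fun x => ?_) (fun y hy y' hy' => ?_) fun x hx => hM.bitIncr_bitFlip hx.1 v
  · simp only [Set.mem_ofPred_eq, bitFlip_mem_iff, bitFlip_self, add_left_inj]
    refine and_congr_right fun _ => and_congr_right fun _ => forall₂_congr fun u hvu => ?_
    rw [bitFlip_of_ne x hvu.ne']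
  · rw [← hM.siteIncr_eq hy.1 hy.2.2, ← hM.siteIncr_eq hy'.1 hy'.2.2, hy.2.1, hy'.2.1]

lemma IsMarkovCocycle.pairIncr_add_two {v u : V} (hvu : G.Adj v u) (c d : Fin 4) :
    pairIncr G M v u (c + 2) d = -pairIncr G M v u c d := by
  rw [pairIncr, pairIncr, ← witnessValue_neg]
  refine witnessValue_comp (e := (bitFlip · v)) (fun y => ⟨bitFlip y v, bitFlip_bitFlip y v⟩)
    (fun x => ?_) (fun y hy y' hy' => ?_) fun x hx => ?_
  · simp only [Set.mem_ofPred_eq, bitFlip_mem_iff, bitFlip_self, add_left_inj,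
      bitFlip_of_ne x hvu.ne']
  · rw [← hM.pairIncr_eq hy.1 hvu, ← hM.pairIncr_eq hy'.1 hvu, hy.2.1, hy.2.2, hy'.2.1, hy'.2.2]
  · rw [bitFlip_comm, hM.bitIncr_bitFlip hx.1, hM.bitIncr_bitFlip (bitFlip_mem hx.1 u)]
    ring

lemma IsMarkovCocycle.pairIncr_comm (v u : V) (c d : Fin 4) :
    pairIncr G M v u c d = pairIncr G M u v d c := by
  rw [pairIncr, pairIncr, show {x | x ∈ homSpace G C4 ∧ x v = c ∧ x u = d} =
    {x | x ∈ homSpace G C4 ∧ x u = d ∧ x v = c} from Set.ext fun _ => and_congr_right' and_comm]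
  exact witnessValue_congr fun x hx => hM.bitIncr_sub_bitIncr_comm hx.1 u v

lemma IsMarkovCocycle.bitIncr_eq_sum [G.LocallyFinite] {x : V → Fin 4} (hx : x ∈ homSpace G C4)
    (v : V) :
    bitIncr M x v = siteIncr G M v (x v) +
      ∑ u ∈ G.neighborFinset v, if 2 ≤ x u then pairIncr G M v u (x v) (x u) else 0 := by
  suffices h : ∀ s : Finset V, ∀ x ∈ homSpace G C4, (∀ u, G.Adj v u → 2 ≤ x u → u ∈ s) →
      bitIncr M x v = siteIncr G M v (x v) +
        ∑ u ∈ G.neighborFinset v, if 2 ≤ x u then pairIncr G M v u (x v) (x u) else 0 from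
    h _ x hx fun u hu _ => (G.mem_neighborFinset v u).2 hu
  intro s
  induction s using Finset.induction_on with
  | empty =>
    intro x hx hs
    have hlow : ∀ u, G.Adj v u → x u < 2 := fun u hu => not_le.1 fun h => by simpa using hs u hu h
    rw [hM.siteIncr_eq hx hlow, Finset.sum_eq_zero fun u hu =>
      if_neg (not_le.2 (hlow u ((G.mem_neighborFinset v u).1 hu))), add_zero]
  | insert a s _ ih =>
    intro x hx hs
    by_cases hxa : G.Adj v a ∧ 2 ≤ x a
    · have hx'a : ¬2 ≤ bitFlip x a a := by
        rw [bitFlip_self, two_le_add_two_iff, not_not]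
        exact hxa.2
      have hs' : ∀ u, G.Adj v u → 2 ≤ bitFlip x a u → u ∈ s := fun u hu h => by
        rcases eq_or_ne u a with rfl | hua
        · exact absurd h hx'a
        · rw [bitFlip_of_ne x hua] at h
          exact (Finset.mem_insert.1 (hs u hu h)).resolve_left hua
      have hmem : a ∈ G.neighborFinset v := (G.mem_neighborFinset v a).2 hxa.1
      have hsplit : bitIncr M x v = bitIncr M (bitFlip x a) v + pairIncr G M v a (x v) (x a) := by
        rw [hM.pairIncr_eq hx hxa.1]
        ring
      rw [hsplit, ih _ (bitFlip_mem hx a) hs', bitFlip_of_ne x hxa.1.ne,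
        ← Finset.add_sum_erase _ _ hmem, ← Finset.add_sum_erase _ _ hmem, if_neg hx'a,
        if_pos hxa.2, Finset.sum_congr rfl fun u hu => by
          rw [bitFlip_of_ne x (Finset.ne_of_mem_erase hu)]]
      ring
    · exact ih x hx fun u hu h =>
        (Finset.mem_insert.1 (hs u hu h)).resolve_left fun hua => hxa ⟨hua ▸ hu, hua ▸ h⟩

end SiteAndPairIncrements

section BitInteraction

variable (G : SimpleGraph V) (M : (V → Fin 4) → (V → Fin 4) → ℝ)

-- Potentials relative to the configuration with all bits `0`; the factor `1 / 2` makes up for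
-- `edgeInteraction` counting both orientations of an edge.
noncomputable def sitePot (v : V) (c : Fin 4) : ℝ :=
  if 2 ≤ c then -siteIncr G M v c else 0

noncomputable def edgePot (v u : V) (c d : Fin 4) : ℝ :=
  if 2 ≤ c ∧ 2 ≤ d then -pairIncr G M v u c d / 2 else 0

noncomputable def bitInteraction : ∀ F : Set V, (F → Fin 4) → ℝ :=
  siteInteraction (sitePot G M) + edgeInteraction G (edgePot G M)

lemma isNNInteraction_bitInteraction : IsNNInteraction G (bitInteraction G M) := fun F hF p => by
  simp [bitInteraction, isNNInteraction_siteInteraction _ F hF,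
    isNNInteraction_edgeInteraction _ F hF]

variable {G M} (hM : IsMarkovCocycle G (homSpace G C4) M)
include hM

lemma IsMarkovCocycle.sitePot_add_two_sub (v : V) (c : Fin 4) :
    sitePot G M v (c + 2) - sitePot G M v c = siteIncr G M v c := by
  by_cases hc : 2 ≤ c
  · simp [sitePot, hc, two_le_add_two_iff]
  · simp [sitePot, hc, two_le_add_two_iff, hM.siteIncr_add_two]

lemma IsMarkovCocycle.edgePot_comm (v u : V) (c d : Fin 4) :
    edgePot G M v u c d = edgePot G M u v d c := by
  simp only [edgePot, and_comm (a := 2 ≤ c), hM.pairIncr_comm v u]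

lemma IsMarkovCocycle.edgePot_add_two_sub {v u : V} (hvu : G.Adj v u) (c d : Fin 4) :
    edgePot G M v u (c + 2) d - edgePot G M v u c d =
      if 2 ≤ d then pairIncr G M v u c d / 2 else 0 := by
  by_cases hd : 2 ≤ d <;> by_cases hc : 2 ≤ c <;>
    simp [edgePot, hc, hd, two_le_add_two_iff, hM.pairIncr_add_two hvu]; ring

lemma IsMarkovCocycle.bitIncr_eq_gibbsSum [G.LocallyFinite] {x : V → Fin 4}
    (hx : x ∈ homSpace G C4) (v : V) :
    bitIncr M x v = gibbsSum (bitInteraction G M) x (bitFlip x v) := by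
  rw [bitInteraction, gibbsSum_add (isNNInteraction_siteInteraction _)
      (isNNInteraction_edgeInteraction _) (finite_diff_bitFlip x v),
    gibbsSum_siteInteraction _ (D := {v}) fun u hu => ?_, Finset.sum_singleton, bitFlip_self,
    hM.sitePot_add_two_sub, bitFlip, gibbsSum_edgeInteraction_update, hM.bitIncr_eq_sum hx]
  · congr 1
    refine Finset.sum_congr rfl fun u hu => ?_
    have h := hM.edgePot_add_two_sub ((G.mem_neighborFinset v u).1 hu) (x v) (x u)
    rw [hM.edgePot_comm u v, hM.edgePot_comm u v]
    split_ifs at h ⊢ <;> linarith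
  · exact Finset.mem_singleton.2 (by_contra fun h => hu (bitFlip_of_ne x h).symm)

end BitInteraction

section Components

variable {G : SimpleGraph V}

lemma IsCocycle.apply_bitFlip_parityFlip {E : (V → Fin 4) → (V → Fin 4) → ℝ}
    (hE : IsCocycle (homSpace G C4) E) (hbit : ∀ x ∈ homSpace G C4, ∀ v, E x (bitFlip x v) = 0)
    {K : G.ConnectedComponent} (hK : K.supp.Finite) {x : V → Fin 4} (hx : x ∈ homSpace G C4)
    (w : V) : E (bitFlip x w) (parityFlip K.supp (bitFlip x w)) = E x (parityFlip K.supp x) := by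
  have hxw := bitFlip_mem hx w
  have hpx := parityFlip_mem K hx
  have h₁ : (bitFlip x w, x) ∈ Delta (homSpace G C4) := by
    simpa only [bitFlip_bitFlip] using mem_Delta_bitFlip hxw w
  have h₂ := mem_Delta_parityFlip hK hx
  have h₃ := mem_Delta_bitFlip hpx w
  have h₀ : E (bitFlip x w) x = 0 := by simpa only [bitFlip_bitFlip] using hbit _ hxw w
  rw [parityFlip_bitFlip, hE _ _ _ h₁ (mem_Delta_trans h₂ h₃), hE _ _ _ h₂ h₃, hbit _ hpx, h₀]
  ring

variable (G) (M : (V → Fin 4) → (V → Fin 4) → ℝ)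

noncomputable def compDefect (K : G.ConnectedComponent) (x : V → Fin 4) : ℝ :=
  M x (parityFlip K.supp x) - gibbsSum (bitInteraction G M) x (parityFlip K.supp x)

variable {G M} (hM : IsMarkovCocycle G (homSpace G C4) M)
include hM

lemma IsMarkovCocycle.compDefect_congr {K : G.ConnectedComponent} (hK : K.supp.Finite)
    {x x' : V → Fin 4} (hx : x ∈ homSpace G C4) (hx' : x' ∈ homSpace G C4)
    (h : Set.EqOn x x' K.supp) : compDefect G M K x = compDefect G M K x' := by
  have hsim : MarkovSimilar G x (parityFlip K.supp x) x' (parityFlip K.supp x') := by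
    refine ⟨K.supp, hK, fun u hu => ?_, fun u hu => ?_⟩
    · exact ⟨(parityFlip_of_notMem x hu).symm, (parityFlip_of_notMem x' hu).symm⟩
    · rw [boundary_supp, Set.union_empty] at hu
      rw [parityFlip_of_mem x hu, parityFlip_of_mem x' hu, h hu]
      exact ⟨rfl, rfl⟩
  rw [compDefect, compDefect, hM.2.2 _ _ _ _ (mem_Delta_parityFlip hK hx)
    (mem_Delta_parityFlip hK hx') hsim,
    gibbsSum_eq_of_markovSimilar (isNNInteraction_bitInteraction G M) hsim]

variable [G.LocallyFinite]

lemma IsMarkovCocycle.isCocycle_bitInteraction :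
    IsCocycle (homSpace G C4) fun x y => M x y - gibbsSum (bitInteraction G M) x y :=
  hM.isCocycle_sub_gibbsSum (isNNInteraction_bitInteraction G M)

lemma IsMarkovCocycle.compDefect_bitFlip {K : G.ConnectedComponent} (hK : K.supp.Finite)
    {x : V → Fin 4} (hx : x ∈ homSpace G C4) (w : V) :
    compDefect G M K (bitFlip x w) = compDefect G M K x :=
  hM.isCocycle_bitInteraction.apply_bitFlip_parityFlip
    (fun _ hz v => sub_eq_zero.2 (hM.bitIncr_eq_gibbsSum hz v)) hK hx w

lemma IsMarkovCocycle.compDefect_parityFlip {K : G.ConnectedComponent} (hK : K.supp.Finite)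
    {x : V → Fin 4} (hx : x ∈ homSpace G C4) :
    compDefect G M K (parityFlip K.supp x) = -compDefect G M K x := by
  simp only [compDefect, parityFlip_parityFlip]
  exact hM.isCocycle_bitInteraction.apply_swap (mem_Delta_parityFlip hK hx)

lemma IsMarkovCocycle.compDefect_eq_of_parity_eq {K : G.ConnectedComponent} (hK : K.supp.Finite)
    {x x' : V → Fin 4} (hx : x ∈ homSpace G C4) (hx' : x' ∈ homSpace G C4) {v : V}
    (hv : v ∈ K.supp) (h : parity (x v) = parity (x' v)) :
    compDefect G M K x = compDefect G M K x' := by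
  set y := K.supp.piecewise x x'
  have hxy : Set.EqOn x y K.supp := (Set.piecewise_eqOn _ _ _).symm
  have hpar : ∀ w, parity (y w) = parity (x' w) := fun w => by
    by_cases hw : w ∈ K.supp
    · rw [← hxy hw]
      exact parity_eq_of_mem_supp hx hx' hv hw h
    · simp only [y, Set.piecewise_eq_of_notMem _ _ _ hw]
  have hy : y ∈ homSpace G C4 := mem_homSpace_C4_of_parity_eq hx' hpar
  have hyx' : (y, x') ∈ Delta (homSpace G C4) := ⟨hy, hx', hK.subset fun w hw =>
    by_contra fun hwK => hw (Set.piecewise_eq_of_notMem _ _ _ hwK)⟩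
  have hE : IsCocycle (homSpace G C4) fun a b => compDefect G M K b - compDefect G M K a :=
    fun _ _ _ _ _ => by ring
  have := hE.eq_zero_of_parity_eq
    (fun a ha w => by simp only [hM.compDefect_bitFlip hK ha, sub_self]) hyx' hpar
  rw [hM.compDefect_congr hK hx hy hxy]
  linarith

end Components

section Correction

variable (G : SimpleGraph V) (M : (V → Fin 4) → (V → Fin 4) → ℝ)

noncomputable def phaseDefect (v : V) (c : Fin 4) : ℝ :=
  witnessValue {x | x ∈ homSpace G C4 ∧ x v = c} (compDefect G M (G.connectedComponentMk v))

/-- The defect `D` of flipping the component of `v`, spread evenly over its `n` sites: at each site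
the correction moves from `-D / 2n` to `D / 2n`. For an infinite component `ncard` is `0`, and so is
the correction. -/
noncomputable def correctionPot (v : V) (c : Fin 4) : ℝ :=
  -phaseDefect G M v c / (2 * (G.connectedComponentMk v).supp.ncard)

noncomputable def gibbsInteraction : ∀ F : Set V, (F → Fin 4) → ℝ :=
  bitInteraction G M + siteInteraction (correctionPot G M)

lemma isNNInteraction_gibbsInteraction : IsNNInteraction G (gibbsInteraction G M) :=
  fun F hF p => by
    simp [gibbsInteraction, isNNInteraction_bitInteraction G M F hF p,
      isNNInteraction_siteInteraction (G := G) _ F hF]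

variable {G M} (hM : IsMarkovCocycle G (homSpace G C4) M) [G.LocallyFinite]
include hM

lemma IsMarkovCocycle.phaseDefect_eq {v : V} (hK : (G.connectedComponentMk v).supp.Finite)
    {x : V → Fin 4} (hx : x ∈ homSpace G C4) :
    phaseDefect G M v (x v) = compDefect G M (G.connectedComponentMk v) x :=
  witnessValue_eq (fun _ hy _ hz => hM.compDefect_eq_of_parity_eq hK hy.1 hz.1 rfl
    (congrArg parity (hy.2.trans hz.2.symm))) ⟨hx, rfl⟩

lemma IsMarkovCocycle.correctionPot_add_two (v : V) (c : Fin 4) :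
    correctionPot G M v (c + 2) = correctionPot G M v c := by
  by_cases hK : (G.connectedComponentMk v).supp.Finite
  · rw [correctionPot, correctionPot, phaseDefect, phaseDefect]
    congr 2
    refine witnessValue_comp (e := (bitFlip · v)) (fun y => ⟨bitFlip y v, bitFlip_bitFlip y v⟩)
      (fun x => ?_) (fun y hy y' hy' => ?_) fun x hx => hM.compDefect_bitFlip hK hx.1 v
    · simp only [Set.mem_ofPred_eq, bitFlip_mem_iff, bitFlip_self, add_left_inj]
    · rw [← hM.phaseDefect_eq hK hy.1, ← hM.phaseDefect_eq hK hy'.1, hy.2, hy'.2]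
  · simp [correctionPot, Set.Infinite.ncard hK]

lemma IsMarkovCocycle.eq_gibbsSum_bitFlip {x : V → Fin 4} (hx : x ∈ homSpace G C4) (v : V) :
    M x (bitFlip x v) = gibbsSum (gibbsInteraction G M) x (bitFlip x v) := by
  rw [gibbsInteraction, gibbsSum_add (isNNInteraction_bitInteraction G M)
      (isNNInteraction_siteInteraction _) (finite_diff_bitFlip x v),
    gibbsSum_siteInteraction _ (D := {v}) fun u hu => ?_, Finset.sum_singleton, bitFlip_self,
    hM.correctionPot_add_two, sub_self, add_zero]
  · exact hM.bitIncr_eq_gibbsSum hx v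
  · exact Finset.mem_singleton.2 (by_contra fun h => hu (bitFlip_of_ne x h).symm)

lemma IsMarkovCocycle.eq_gibbsSum_parityFlip {K : G.ConnectedComponent} (hK : K.supp.Finite)
    {x : V → Fin 4} (hx : x ∈ homSpace G C4) :
    M x (parityFlip K.supp x) = gibbsSum (gibbsInteraction G M) x (parityFlip K.supp x) := by
  have hdiff : ∀ w, x w ≠ parityFlip K.supp x w → w ∈ hK.toFinset := fun w hw =>
    hK.mem_toFinset.2 (by_contra fun hwK => hw (parityFlip_of_notMem x hwK).symm)
  have hn : (K.supp.ncard : ℝ) ≠ 0 := by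
    exact_mod_cast (K.nonempty_supp.ncard_pos hK).ne'
  have hterm : ∀ w ∈ hK.toFinset,
      correctionPot G M w (parityFlip K.supp x w) - correctionPot G M w (x w) =
        compDefect G M K x / K.supp.ncard := fun w hw => by
    have hwK : G.connectedComponentMk w = K := (K.mem_supp_iff w).1 (hK.mem_toFinset.1 hw)
    rw [correctionPot, correctionPot, hM.phaseDefect_eq (hwK ▸ hK) (parityFlip_mem K hx),
      hM.phaseDefect_eq (hwK ▸ hK) hx, hwK, hM.compDefect_parityFlip hK hx]
    field_simp
    ring
  rw [gibbsInteraction, gibbsSum_add (isNNInteraction_bitInteraction G M)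
      (isNNInteraction_siteInteraction _) (mem_Delta_parityFlip hK hx).2.2,
    gibbsSum_siteInteraction _ hdiff, Finset.sum_congr rfl hterm, Finset.sum_const,
    ← Set.ncard_eq_toFinset_card K.supp hK, nsmul_eq_mul, mul_div_cancel₀ _ hn, compDefect]
  ring

lemma IsMarkovCocycle.eq_gibbsSum {x y : V → Fin 4} (hxy : (x, y) ∈ Delta (homSpace G C4)) :
    M x y = gibbsSum (gibbsInteraction G M) x y :=
  sub_eq_zero.1 <| (hM.isCocycle_sub_gibbsSum (isNNInteraction_gibbsInteraction G M)).eq_zero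
    (fun _ hz v => sub_eq_zero.2 (hM.eq_gibbsSum_bitFlip hz v))
    (fun _ hz _ hK => sub_eq_zero.2 (hM.eq_gibbsSum_parityFlip hK hz)) hxy

end Correction

section Equivariance

variable {G : SimpleGraph V} {S : Subgroup (Equiv.Perm V)} {g : Equiv.Perm V}

lemma confAct_bitFlip (g : Equiv.Perm V) (x : V → Fin 4) (v : V) :
    confAct g (bitFlip x v) = bitFlip (confAct g x) (g v) := by
  funext w
  simp only [confAct, bitFlip, Function.update_apply, Equiv.Perm.inv_eq_iff_eq]
  split_ifs with h
  · subst h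
    simp
  · rfl

lemma confAct_parityFlip (g : Equiv.Perm V) (C : Set V) (x : V → Fin 4) :
    confAct g (parityFlip C x) = parityFlip (g '' C) (confAct g x) := by
  funext w
  by_cases hw : g⁻¹ w ∈ C
  · rw [confAct, parityFlip_of_mem x hw, parityFlip_of_mem _ (show w ∈ g '' C from ⟨g⁻¹ w, hw, by simp⟩)]
    rfl
  · rw [confAct, parityFlip_of_notMem x hw, parityFlip_of_notMem]
    · rfl
    · rintro ⟨a, ha, rfl⟩
      exact hw (by simpa using ha)

lemma confAct_mem_homSpace {B : Type*} {H : SimpleGraph B} (hS : PreservesAdj G S)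
    (hg : g ∈ S) {x : V → B} (hx : x ∈ homSpace G H) : confAct g x ∈ homSpace G H :=
  fun v w hvw => hx _ _ ((hS g⁻¹ (S.inv_mem hg) v w).2 hvw)

lemma confAct_mem_homSpace_iff {B : Type*} {H : SimpleGraph B} (hS : PreservesAdj G S)
    (hg : g ∈ S) {x : V → B} : confAct g x ∈ homSpace G H ↔ x ∈ homSpace G H := by
  refine ⟨fun h => ?_, confAct_mem_homSpace hS hg⟩
  simpa only [confAct_inv_confAct] using confAct_mem_homSpace hS (S.inv_mem hg) h

lemma invariantSpace_homSpace {B : Type*} (hS : PreservesAdj G S) (H : SimpleGraph B) :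
    InvariantSpace S (homSpace G H) := fun g hg => Set.ext fun y =>
  ⟨by rintro ⟨x, hx, rfl⟩; exact confAct_mem_homSpace hS hg hx,
    fun hy => ⟨_, confAct_mem_homSpace hS (S.inv_mem hg) hy, confAct_confAct_inv g y⟩⟩

lemma supp_connectedComponentMk_apply (hS : PreservesAdj G S) (hg : g ∈ S) (v : V) :
    (G.connectedComponentMk (g v)).supp = g '' (G.connectedComponentMk v).supp := by
  let φ : G ≃g G := ⟨g, hS g hg _ _⟩
  ext w
  obtain ⟨w, rfl⟩ := g.surjective w
  simp only [SimpleGraph.ConnectedComponent.mem_supp_iff, SimpleGraph.ConnectedComponent.eq,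
    Set.mem_image, g.injective.eq_iff, exists_eq_right]
  exact φ.reachable_iff

variable {M : (V → Fin 4) → (V → Fin 4) → ℝ}

lemma bitIncr_confAct (hInv : InvariantCocycle S M) (hg : g ∈ S) (x : V → Fin 4) (v : V) :
    bitIncr M (confAct g x) (g v) = bitIncr M x v := by
  rw [bitIncr, bitIncr, ← confAct_bitFlip, hInv g hg]

variable (hM : IsMarkovCocycle G (homSpace G C4) M) (hS : PreservesAdj G S)
  (hInv : InvariantCocycle S M)
include hM hS hInv

lemma IsMarkovCocycle.siteIncr_apply (hg : g ∈ S) (v : V) (c : Fin 4) :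
    siteIncr G M (g v) c = siteIncr G M v c := by
  refine witnessValue_comp (confAct_surjective g) (fun x => ?_) (fun y hy y' hy' => ?_)
    fun x _ => bitIncr_confAct hInv hg x v
  · simp only [Set.mem_ofPred_eq, confAct_mem_homSpace_iff hS hg, confAct_apply_apply]
    refine and_congr_right fun _ => and_congr_right fun _ => ⟨fun h u hvu => ?_, fun h u hu => ?_⟩
    · simpa [confAct] using h (g u) ((hS g hg v u).2 hvu)
    · exact h _ ((hS g hg v (g⁻¹ u)).1 (by simpa using hu))
  · rw [← hM.siteIncr_eq hy.1 hy.2.2, ← hM.siteIncr_eq hy'.1 hy'.2.2, hy.2.1, hy'.2.1]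

lemma IsMarkovCocycle.pairIncr_apply (hg : g ∈ S) {v u : V} (hvu : G.Adj v u) (c d : Fin 4) :
    pairIncr G M (g v) (g u) c d = pairIncr G M v u c d := by
  have hvu' : G.Adj (g v) (g u) := (hS g hg v u).2 hvu
  refine witnessValue_comp (confAct_surjective g) (fun x => ?_) (fun y hy y' hy' => ?_)
    fun x _ => ?_
  · simp only [Set.mem_ofPred_eq, confAct_mem_homSpace_iff hS hg, confAct_apply_apply]
  · rw [← hM.pairIncr_eq hy.1 hvu', ← hM.pairIncr_eq hy'.1 hvu', hy.2.1, hy.2.2, hy'.2.1,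
      hy'.2.2]
  · rw [← confAct_bitFlip, bitIncr_confAct hInv hg, bitIncr_confAct hInv hg]

lemma IsMarkovCocycle.invariantInteraction_bitInteraction :
    InvariantInteraction S (bitInteraction G M) := by
  intro g hg F x
  simp only [bitInteraction, Pi.add_apply]
  rw [invariantInteraction_siteInteraction (fun g hg v c => ?_) g hg F x,
    invariantInteraction_edgeInteraction hS (fun g hg v u hvu c d => ?_) g hg F x]
  · simp only [edgePot, hM.pairIncr_apply hS hInv hg hvu]
  · simp only [sitePot, hM.siteIncr_apply hS hInv hg]

lemma IsMarkovCocycle.compDefect_apply (hg : g ∈ S) (v : V) (x : V → Fin 4) :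
    compDefect G M (G.connectedComponentMk (g v)) (confAct g x) =
      compDefect G M (G.connectedComponentMk v) x := by
  rw [compDefect, compDefect, supp_connectedComponentMk_apply hS hg, ← confAct_parityFlip,
    hInv g hg, gibbsSum_confAct (hM.invariantInteraction_bitInteraction hS hInv) hg]

variable [G.LocallyFinite]

lemma IsMarkovCocycle.phaseDefect_apply (hg : g ∈ S) {v : V}
    (hK : (G.connectedComponentMk v).supp.Finite) (c : Fin 4) :
    phaseDefect G M (g v) c = phaseDefect G M v c := by
  have hK' : (G.connectedComponentMk (g v)).supp.Finite := by
    rw [supp_connectedComponentMk_apply hS hg]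
    exact hK.image g
  refine witnessValue_comp (confAct_surjective g) (fun x => ?_) (fun y hy y' hy' => ?_)
    fun x _ => hM.compDefect_apply hS hInv hg v x
  · simp only [Set.mem_ofPred_eq, confAct_mem_homSpace_iff hS hg, confAct_apply_apply]
  · rw [← hM.phaseDefect_eq hK' hy.1, ← hM.phaseDefect_eq hK' hy'.1, hy.2, hy'.2]

lemma IsMarkovCocycle.correctionPot_apply (hg : g ∈ S) (v : V) (c : Fin 4) :
    correctionPot G M (g v) c = correctionPot G M v c := by
  rw [correctionPot, correctionPot, supp_connectedComponentMk_apply hS hg,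
    Set.ncard_image_of_injective _ g.injective]
  by_cases hK : (G.connectedComponentMk v).supp.Finite
  · rw [hM.phaseDefect_apply hS hInv hg hK]
  · simp [Set.Infinite.ncard hK]

lemma IsMarkovCocycle.invariantInteraction_gibbsInteraction :
    InvariantInteraction S (gibbsInteraction G M) := by
  intro g hg F x
  simp only [gibbsInteraction, Pi.add_apply]
  rw [hM.invariantInteraction_bitInteraction hS hInv g hg F x,
    invariantInteraction_siteInteraction (fun g hg v c => hM.correctionPot_apply hS hInv hg v c) g
      hg F x]

end Equivariance

section MarkovIsGibbs

variable {G : SimpleGraph V} [G.LocallyFinite]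

lemma markovSet_subset_gibbsSet : markovSet G (homSpace G C4) ⊆ gibbsSet G (homSpace G C4) :=
  fun M hM => ⟨hM.1, gibbsInteraction G M, isNNInteraction_gibbsInteraction G M,
    fun _ _ hxy => hM.eq_gibbsSum hxy⟩

lemma markovSetInv_subset_gibbsSetInv {S : Subgroup (Equiv.Perm V)} (hS : PreservesAdj G S) :
    markovSetInv G S (homSpace G C4) ⊆ gibbsSetInv G S (homSpace G C4) :=
  fun M ⟨hM, hInv⟩ => ⟨hM.1, gibbsInteraction G M, isNNInteraction_gibbsInteraction G M,
    hM.invariantInteraction_gibbsInteraction hS hInv, fun _ _ hxy => hM.eq_gibbsSum hxy⟩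

end MarkovIsGibbs

theorem statement19_general
    (G : SimpleGraph V) (hlf : ∀ v : V, (G.neighborSet v).Finite)
    (S : Subgroup (Equiv.Perm V)) (hS : PreservesAdj G S) :
    IsHammersleyClifford G (homSpace G C4) ∧
      IsGHammersleyClifford G S (homSpace G C4) := by
  have : G.LocallyFinite := fun v => (hlf v).fintype
  exact ⟨markovSet_subset_gibbsSet.antisymm gibbsSet_subset_markovSet,
    (markovSetInv_subset_gibbsSetInv hS).antisymm
      (gibbsSetInv_subset_markovSetInv (invariantSpace_homSpace hS C4))⟩

/-- For every bipartite countable locally finite graph `G` and every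
subgroup of automorphisms, `Hom(G, C₄)` is Hammersley-Clifford and
`G`-Hammersley-Clifford. -/
theorem statement19 [Countable V]
    (G : SimpleGraph V) (hlf : ∀ v : V, (G.neighborSet v).Finite) (hbip : Bipartite G)
    (S : Subgroup (Equiv.Perm V)) (hS : PreservesAdj G S) :
    IsHammersleyClifford G (homSpace G C4) ∧
      IsGHammersleyClifford G S (homSpace G C4) :=
  statement19_general G hlf S hS
end HC
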